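/- arXiv:2208.13013 — 4 statements merged into one kernel-verified Lean document; each statement's English description precedes it below -/
import Mathlib

section
/- Under the same hypotheses (1-D steady Euler with force $\bar f$, constant mass flux $J=\bar\rho\bar u>0$), the squared Mach number $\bar M^2 = \bar u^2/c^2(\bar\rho)$ satisfies the ODE $\frac{d}{dx}\bar M^2 = \frac{(\gamma+1)\bar M^2}{\bar M^2 - 1}\cdot\frac{\bar f}{c^2(\bar\rho)}$ wherever $\bar M^2\neq 1$. -/
/-!
Differentiating the mass flux gives `ρ' u = -ρ u'`.  Substituting this into the momentum equation
yields `u' (u² - c²) = u f`, and substituting it into the derivative of `M² = u² / c²`, where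
`(c²)' = (γ - 1) c² ρ' / ρ`, yields `(M²)' = (γ + 1) u u' / c²`.  Eliminating `u'` between these two
identities gives the Mach number equation.
-/

noncomputable def soundSpeedSq (γ r : ℝ) : ℝ := γ * r ^ (γ - 1)

lemma steady_euler_velocity_eq {r v r' v' c2 f : ℝ} (hr : r ≠ 0)
    (hmass : r' * v + r * v' = 0) (hmom : r * v * v' + c2 * r' = r * f) :
    v' * (v ^ 2 - c2) = v * f := by
  have : r * (v' * (v ^ 2 - c2) - v * f) = 0 := by linear_combination v * hmom - c2 * hmass
  linear_combination (mul_eq_zero.mp this).resolve_left hr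

section

variable {γ : ℝ} {ρ u : ℝ → ℝ} {ρ' u' x : ℝ}

lemma soundSpeedSq_ne_zero (hγ : γ ≠ 0) {r : ℝ} (hr : 0 < r) : soundSpeedSq γ r ≠ 0 :=
  mul_ne_zero hγ (Real.rpow_pos_of_pos hr _).ne'

lemma HasDerivAt.rpow_const_soundSpeedSq (hρ : HasDerivAt ρ ρ' x) (hx : 0 < ρ x) :
    HasDerivAt (fun y => ρ y ^ γ) (soundSpeedSq γ (ρ x) * ρ') x := by
  convert hρ.rpow_const (p := γ) (Or.inl hx.ne') using 1
  unfold soundSpeedSq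
  ring

lemma HasDerivAt.soundSpeedSq (hρ : HasDerivAt ρ ρ' x) (hx : 0 < ρ x) :
    HasDerivAt (fun y => soundSpeedSq γ (ρ y)) ((γ - 1) * soundSpeedSq γ (ρ x) * ρ' / ρ x) x := by
  refine ((hρ.rpow_const (p := γ - 1) (Or.inl hx.ne')).const_mul γ).congr_deriv ?_
  rw [_root_.soundSpeedSq, Real.rpow_sub_one hx.ne' (γ - 1)]
  field_simp

lemma mul_deriv_add_eq_zero_of_mul_eq_const {J : ℝ} (hmass : ∀ y, ρ y * u y = J)
    (hρ : HasDerivAt ρ ρ' x) (hu : HasDerivAt u u' x) : ρ' * u x + ρ x * u' = 0 := by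
  have hconst : HasDerivAt (fun y => ρ y * u y) 0 x := by
    simpa only [hmass] using hasDerivAt_const x J
  exact (hρ.mul hu).unique hconst

lemma hasDerivAt_machSq (hγ : γ ≠ 0) (hρ : HasDerivAt ρ ρ' x) (hu : HasDerivAt u u' x)
    (hx : 0 < ρ x) (hmass : ρ' * u x + ρ x * u' = 0) :
    HasDerivAt (fun y => u y ^ 2 / soundSpeedSq γ (ρ y))
      ((γ + 1) * u x * u' / soundSpeedSq γ (ρ x)) x := by
  have hc := soundSpeedSq_ne_zero hγ hx
  refine ((hu.fun_pow 2).div (hρ.soundSpeedSq (γ := γ) hx) hc).congr_deriv ?_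
  field_simp
  linear_combination (1 - γ) * u x * hmass

end

lemma machSq_deriv_eq {γ v v' c2 f : ℝ} (hc : c2 ≠ 0) (hM : v ^ 2 / c2 ≠ 1)
    (h : v' * (v ^ 2 - c2) = v * f) :
    (γ + 1) * v * v' / c2 = (γ + 1) * (v ^ 2 / c2) / (v ^ 2 / c2 - 1) * (f / c2) := by
  have hsub : v ^ 2 - c2 ≠ 0 := fun h0 => hM (by rw [sub_eq_zero.mp h0, div_self hc])
  rw [div_sub_one hc]
  field_simp
  linear_combination (γ + 1) * v * h

theorem stmt1_general (γ J : ℝ) (hγ : 1 < γ)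
    (u ρ f : ℝ → ℝ) (hu : Differentiable ℝ u) (hρ : Differentiable ℝ ρ)
    (hρpos : ∀ x, 0 < ρ x)
    (hmass : ∀ x, ρ x * u x = J)
    (hmom : ∀ x, ρ x * u x * deriv u x + deriv (fun y => ρ y ^ γ) x = ρ x * f x)
    (x : ℝ) (hx : (u x) ^ 2 / (γ * ρ x ^ (γ - 1)) ≠ 1) :
    deriv (fun y => (u y) ^ 2 / (γ * ρ y ^ (γ - 1))) x =
      (γ + 1) * ((u x) ^ 2 / (γ * ρ x ^ (γ - 1))) /
          ((u x) ^ 2 / (γ * ρ x ^ (γ - 1)) - 1) *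
        (f x / (γ * ρ x ^ (γ - 1))) := by
  have hγ0 : γ ≠ 0 := by positivity
  have hdρ := (hρ x).hasDerivAt
  have hdu := (hu x).hasDerivAt
  have hmass' := mul_deriv_add_eq_zero_of_mul_eq_const hmass hdρ hdu
  have hmom' : ρ x * u x * deriv u x + soundSpeedSq γ (ρ x) * deriv ρ x = ρ x * f x := by
    rw [← (hdρ.rpow_const_soundSpeedSq (hρpos x)).deriv]
    exact hmom x
  have hvel := steady_euler_velocity_eq (hρpos x).ne' hmass' hmom'
  exact (hasDerivAt_machSq hγ0 hdρ hdu (hρpos x) hmass').deriv.trans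
    (machSq_deriv_eq (soundSpeedSq_ne_zero hγ0 (hρpos x)) hx hvel)

/-- For 1-D steady isentropic Euler flow with external force `f`,
constant mass flux `ρ u = J > 0`, the squared Mach number
`M² = u² / c²(ρ)` (with `c²(ρ) = γ ρ^(γ-1)`) satisfies
`(M²)' = (γ+1) M² / (M² - 1) · f / c²(ρ)` wherever `M² ≠ 1`. -/
theorem stmt1 (γ J : ℝ) (hγ : 1 < γ) (hJ : 0 < J)
    (u ρ f : ℝ → ℝ) (hu : Differentiable ℝ u) (hρ : Differentiable ℝ ρ)
    (hupos : ∀ x, 0 < u x) (hρpos : ∀ x, 0 < ρ x)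
    (hmass : ∀ x, ρ x * u x = J)
    (hmom : ∀ x, ρ x * u x * deriv u x + deriv (fun y => ρ y ^ γ) x = ρ x * f x)
    (x : ℝ) (hx : (u x) ^ 2 / (γ * ρ x ^ (γ - 1)) ≠ 1) :
    deriv (fun y => (u y) ^ 2 / (γ * ρ y ^ (γ - 1))) x =
      (γ + 1) * ((u x) ^ 2 / (γ * ρ x ^ (γ - 1))) /
          ((u x) ^ 2 / (γ * ρ x ^ (γ - 1)) - 1) *
        (f x / (γ * ρ x ^ (γ - 1))) :=
  stmt1_general γ J hγ u ρ f hu hρ hρpos hmass hmom x hx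
end

section
/- Consider the background transonic shock solution with shock at $x=L_s$: supersonic branch $(\bar u^-,\bar\rho^-)$ on $[L_0,L_s]$ and subsonic branch $(\bar u^+,\bar\rho^+)$ on $[L_s,L_1]$, both solving $\rho u = J$, $\rho u u' + (\rho^\gamma)' = \rho \bar f$ with $\bar f>0$, joined by the Rankine–Hugoniot conditions. Regarding the downstream exit density $\bar\rho^+(L_1)$ as a function of the shock position $L_s$, one has $\frac{d}{dL_s}\bar\rho^+(L_1) < 0$; equivalently the exit pressure $P_e=(\bar\rho^+(L_1))^\gamma$ is a strictly decreasing function of the shock position $L_s$. -/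
open Set


lemma rpow_aux {x : ℝ} (hx : 0 < x) (γ : ℝ) : x ^ (γ - 1) * x ^ 2 = x ^ (γ + 1) := by
  rw [← Real.rpow_natCast x 2, ← Real.rpow_add hx]
  norm_num
  ring_nf

lemma key_pos {J γ x : ℝ} (hx : 0 < x) (h : J ^ 2 < γ * x ^ (γ + 1)) :
    0 < γ * x ^ (γ - 1) - J ^ 2 / x ^ 2 := by
  rw [sub_pos, div_lt_iff₀ (by positivity)]
  calc J ^ 2 < γ * x ^ (γ + 1) := h
    _ = γ * x ^ (γ - 1) * x ^ 2 := by rw [mul_assoc, rpow_aux hx]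

lemma hasDerivAt_Hfun {J γ ρ : ℝ} (hρ : ρ ≠ 0) :
    HasDerivAt (fun x : ℝ => J ^ 2 / x + x ^ γ) (γ * ρ ^ (γ - 1) - J ^ 2 / ρ ^ 2) ρ := by
  have h1 : HasDerivAt (fun x : ℝ => J ^ 2 / x) (J ^ 2 * -(ρ ^ 2)⁻¹) ρ := by
    simpa [div_eq_mul_inv] using (hasDerivAt_inv hρ).const_mul (J ^ 2)
  have h2 := Real.hasDerivAt_rpow_const (x := ρ) (p := γ) (Or.inl hρ)
  refine (h1.add h2).congr_deriv ?_
  ring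

lemma hasDerivAt_Bfun {J γ ρ : ℝ} (hρ : 0 < ρ) (hγ : γ ≠ 1) :
    HasDerivAt (fun x : ℝ => J ^ 2 / 2 * x ^ (-2 : ℝ) + γ / (γ - 1) * x ^ (γ - 1))
      ((γ * ρ ^ (γ - 1) - J ^ 2 / ρ ^ 2) / ρ) ρ := by
  have h1 := (Real.hasDerivAt_rpow_const (x := ρ) (p := (-2 : ℝ)) (Or.inl hρ.ne')).const_mul
      (J ^ 2 / 2)
  have h2 := (Real.hasDerivAt_rpow_const (x := ρ) (p := γ - 1) (Or.inl hρ.ne')).const_mul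
      (γ / (γ - 1))
  refine (h1.add h2).congr_deriv ?_
  have e1 : ρ ^ ((-2 : ℝ) - 1) = (ρ ^ 2 * ρ)⁻¹ := by
    rw [show ((-2 : ℝ) - 1) = -((3 : ℕ) : ℝ) by norm_num, Real.rpow_neg hρ.le,
      Real.rpow_natCast]
    norm_num [pow_succ]
  have e2 : ρ ^ (γ - 1 - 1) = ρ ^ (γ - 1) / ρ := by
    rw [Real.rpow_sub hρ, Real.rpow_one]
  rw [e1, e2]
  have hγ' : γ - 1 ≠ 0 := sub_ne_zero.mpr hγ
  have e3 : γ / (γ - 1) * ((γ - 1) * (ρ ^ (γ - 1) / ρ)) = γ * (ρ ^ (γ - 1) / ρ) := by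
    rw [← mul_assoc, div_mul_cancel₀ _ hγ']
  rw [e3]
  ring

lemma subsonic_strictMono {J γ a b : ℝ} (hγ1 : 1 < γ)
    (ha : 0 < a) (hsa : J ^ 2 < γ * a ^ (γ + 1)) (hab : a < b) :
    J ^ 2 / a + a ^ γ < J ^ 2 / b + b ^ γ ∧
    J ^ 2 / 2 * a ^ (-2 : ℝ) + γ / (γ - 1) * a ^ (γ - 1) <
      J ^ 2 / 2 * b ^ (-2 : ℝ) + γ / (γ - 1) * b ^ (γ - 1) := by
  have hpos : ∀ x ∈ Icc a b, 0 < x := fun x hx => lt_of_lt_of_le ha hx.1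
  have hsx : ∀ x ∈ Icc a b, J ^ 2 < γ * x ^ (γ + 1) := by
    intro x hx
    exact hsa.trans_le (mul_le_mul_of_nonneg_left
      (Real.rpow_le_rpow ha.le hx.1 (by linarith)) (by linarith))
  have hma : a ∈ Icc a b := left_mem_Icc.2 hab.le
  have hmb : b ∈ Icc a b := right_mem_Icc.2 hab.le
  constructor
  · have hH : StrictMonoOn (fun x : ℝ => J ^ 2 / x + x ^ γ) (Icc a b) := by
      apply strictMonoOn_of_deriv_pos (convex_Icc a b)
      · intro x hx
        exact (hasDerivAt_Hfun (hpos x hx).ne').continuousAt.continuousWithinAt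
      · intro x hx
        rw [interior_Icc] at hx
        have hx' : x ∈ Icc a b := Ioo_subset_Icc_self hx
        rw [(hasDerivAt_Hfun (hpos x hx').ne').deriv]
        exact key_pos (hpos x hx') (hsx x hx')
    exact hH hma hmb hab
  · have hB : StrictMonoOn
        (fun x : ℝ => J ^ 2 / 2 * x ^ (-2 : ℝ) + γ / (γ - 1) * x ^ (γ - 1)) (Icc a b) := by
      apply strictMonoOn_of_deriv_pos (convex_Icc a b)
      · intro x hx
        exact (hasDerivAt_Bfun (hpos x hx) hγ1.ne').continuousAt.continuousWithinAt
      · intro x hx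
        rw [interior_Icc] at hx
        have hx' : x ∈ Icc a b := Ioo_subset_Icc_self hx
        rw [(hasDerivAt_Bfun (hpos x hx') hγ1.ne').deriv]
        exact div_pos (key_pos (hpos x hx') (hsx x hx')) (hpos x hx')
    exact hB hma hmb hab

/-- monotonicity of the exit density/pressure in the shock
position.  Let `(um, ρm)` be the supersonic branch on `[L0, L1]` and, for each
shock position `s ∈ (L0, L1)`, let `(up s, ρp s)` be the subsonic branch on
`[s, L1]`, both solving the 1-D steady Euler system with force `f > 0`
(constant mass flux `J`, conservative momentum equation
`(ρ u² + ρ^γ)' = ρ f`), joined at `x = s` by the Rankine–Hugoniot conditions.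
Then the exit density `s ↦ ρp s L1` is strictly decreasing on `(L0, L1)`;
equivalently the exit pressure `s ↦ (ρp s L1)^γ` is strictly decreasing. -/
theorem stmt5 (L0 L1 γ J : ℝ) (hL : L0 < L1) (hγ1 : 1 < γ) (hγ3 : γ < 3)
    (hJ : 0 < J)
    (f : ℝ → ℝ) (hfC : ContDiff ℝ (⊤ : ℕ∞) f) (hf : ∀ x ∈ Icc L0 L1, 0 < f x)
    (ρm um : ℝ → ℝ)
    -- the supersonic branch on [L0, L1]:
    (hmC : ContDiffOn ℝ (⊤ : ℕ∞) ρm (Icc L0 L1) ∧ ContDiffOn ℝ (⊤ : ℕ∞) um (Icc L0 L1))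
    (hmstate : ∀ x ∈ Icc L0 L1, 0 < ρm x ∧ 0 < um x ∧ ρm x * um x = J ∧
      γ * ρm x ^ (γ - 1) < (um x) ^ 2)
    (hmmom : ∀ x ∈ Icc L0 L1,
      HasDerivWithinAt (fun t => ρm t * (um t) ^ 2 + ρm t ^ γ) (ρm x * f x) (Icc L0 L1) x)
    (ρp up : ℝ → ℝ → ℝ)
    -- for each shock position s, the subsonic branch on [s, L1]:
    (hpC : ∀ s ∈ Ioo L0 L1,
      ContDiffOn ℝ (⊤ : ℕ∞) (ρp s) (Icc s L1) ∧ ContDiffOn ℝ (⊤ : ℕ∞) (up s) (Icc s L1))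
    (hpstate : ∀ s ∈ Ioo L0 L1, ∀ x ∈ Icc s L1, 0 < ρp s x ∧ 0 < up s x ∧
      ρp s x * up s x = J ∧ (up s x) ^ 2 < γ * ρp s x ^ (γ - 1))
    (hpmom : ∀ s ∈ Ioo L0 L1, ∀ x ∈ Icc s L1,
      HasDerivWithinAt (fun t => ρp s t * (up s t) ^ 2 + ρp s t ^ γ)
        (ρp s x * f x) (Icc s L1) x)
    -- Rankine–Hugoniot at the shock x = s:
    (hRH : ∀ s ∈ Ioo L0 L1,
      ρp s s * (up s s) ^ 2 + ρp s s ^ γ = ρm s * (um s) ^ 2 + ρm s ^ γ) :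
    StrictAntiOn (fun s => ρp s L1) (Ioo L0 L1) ∧
    StrictAntiOn (fun s => (ρp s L1) ^ γ) (Ioo L0 L1) := by
  -- subsonic condition for ρp, in the form J² < γ ρ^(γ+1)
  have hsubp : ∀ s ∈ Ioo L0 L1, ∀ x ∈ Icc s L1, J ^ 2 < γ * (ρp s x) ^ (γ + 1) := by
    intro s hs x hx
    obtain ⟨hρ, hu, hJx, hson⟩ := hpstate s hs x hx
    have e1 : J ^ 2 = (ρp s x) ^ 2 * (up s x) ^ 2 := by rw [← hJx]; ring
    have e2 : (ρp s x) ^ 2 * (up s x) ^ 2 < (ρp s x) ^ 2 * (γ * (ρp s x) ^ (γ - 1)) :=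
      mul_lt_mul_of_pos_left hson (by positivity)
    have e3 : (ρp s x) ^ 2 * (γ * (ρp s x) ^ (γ - 1)) = γ * (ρp s x) ^ (γ + 1) := by
      rw [mul_comm ((ρp s x) ^ 2), mul_assoc, rpow_aux hρ]
    rw [e1]; rw [e3] at e2; exact e2
  -- supersonic condition for ρm
  have hsupm : ∀ x ∈ Icc L0 L1, γ * (ρm x) ^ (γ + 1) < J ^ 2 := by
    intro x hx
    obtain ⟨hρ, hu, hJx, hson⟩ := hmstate x hx
    have e1 : J ^ 2 = (ρm x) ^ 2 * (um x) ^ 2 := by rw [← hJx]; ring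
    have e2 : (ρm x) ^ 2 * (γ * (ρm x) ^ (γ - 1)) < (ρm x) ^ 2 * (um x) ^ 2 :=
      mul_lt_mul_of_pos_left hson (by positivity)
    have e3 : (ρm x) ^ 2 * (γ * (ρm x) ^ (γ - 1)) = γ * (ρm x) ^ (γ + 1) := by
      rw [mul_comm ((ρm x) ^ 2), mul_assoc, rpow_aux hρ]
    rw [e1]; rw [e3] at e2; exact e2
  -- the supersonic density lies below the subsonic one
  have hlt : ∀ s ∈ Ioo L0 L1, ∀ x, x ∈ Icc s L1 → x ∈ Icc L0 L1 → ρm x < ρp s x := by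
    intro s hs x hx hx'
    by_contra hc
    push_neg at hc
    have h1 : (ρp s x) ^ (γ + 1) ≤ (ρm x) ^ (γ + 1) :=
      Real.rpow_le_rpow (hpstate s hs x hx).1.le hc (by linarith)
    have h2 : γ * (ρp s x) ^ (γ + 1) ≤ γ * (ρm x) ^ (γ + 1) :=
      mul_le_mul_of_nonneg_left h1 (by linarith)
    have := hsubp s hs x hx
    have := hsupm x hx'
    linarith
  -- pointwise conversion  J²/ρ = ρ u²
  have hconv : ∀ s ∈ Ioo L0 L1, ∀ x ∈ Icc s L1,
      J ^ 2 / ρp s x = ρp s x * (up s x) ^ 2 := by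
    intro s hs x hx
    obtain ⟨hρ, hu, hJx, -⟩ := hpstate s hs x hx
    rw [← hJx]
    field_simp
  -- derivative of the momentum flux H ∘ ρp
  have keyH : ∀ s ∈ Ioo L0 L1, ∀ x ∈ Icc s L1,
      HasDerivWithinAt (fun t => J ^ 2 / ρp s t + (ρp s t) ^ γ)
        (ρp s x * f x) (Icc s L1) x := by
    intro s hs x hx
    refine (hpmom s hs x hx).congr (fun t ht => ?_) ?_
    · rw [hconv s hs t ht]
    · rw [hconv s hs x hx]
  -- derivative of the Bernoulli function B ∘ ρp
  have keyB : ∀ s ∈ Ioo L0 L1, ∀ x ∈ Icc s L1,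
      HasDerivWithinAt
        (fun t => J ^ 2 / 2 * (ρp s t) ^ (-2 : ℝ) + γ / (γ - 1) * (ρp s t) ^ (γ - 1))
        (f x) (Icc s L1) x := by
    intro s hs x hx
    obtain ⟨hρ, hu, hJx, hson⟩ := hpstate s hs x hx
    have hdiff : DifferentiableWithinAt ℝ (ρp s) (Icc s L1) x :=
      ((hpC s hs).1.differentiableOn (by simp)) x hx
    set d := derivWithin (ρp s) (Icc s L1) x with hd
    have hdd : HasDerivWithinAt (ρp s) d (Icc s L1) x := hdiff.hasDerivWithinAt
    have hcompH : HasDerivWithinAt (fun t => J ^ 2 / ρp s t + (ρp s t) ^ γ)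
        ((γ * (ρp s x) ^ (γ - 1) - J ^ 2 / (ρp s x) ^ 2) * d) (Icc s L1) x := by
      exact
        (hasDerivAt_Hfun (J := J) (γ := γ) hρ.ne').comp_hasDerivWithinAt x hdd
    have huniq : (γ * (ρp s x) ^ (γ - 1) - J ^ 2 / (ρp s x) ^ 2) * d = ρp s x * f x := by
      have h1 := hcompH.derivWithin (uniqueDiffOn_Icc hs.2 x hx)
      have h2 := (keyH s hs x hx).derivWithin (uniqueDiffOn_Icc hs.2 x hx)
      exact h1.symm.trans h2
    have hcompB : HasDerivWithinAt
        (fun t => J ^ 2 / 2 * (ρp s t) ^ (-2 : ℝ) + γ / (γ - 1) * (ρp s t) ^ (γ - 1))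
        (((γ * (ρp s x) ^ (γ - 1) - J ^ 2 / (ρp s x) ^ 2) / ρp s x) * d) (Icc s L1) x := by
      exact
        (hasDerivAt_Bfun (J := J) hρ hγ1.ne').comp_hasDerivWithinAt x hdd
    have : ((γ * (ρp s x) ^ (γ - 1) - J ^ 2 / (ρp s x) ^ 2) / ρp s x) * d = f x := by
      rw [div_mul_eq_mul_div, huniq, mul_div_cancel_left₀ (f x) hρ.ne']
    rwa [this] at hcompB
  -- main monotonicity claim
  have main : ∀ s1 ∈ Ioo L0 L1, ∀ s2 ∈ Ioo L0 L1, s1 < s2 → ρp s2 L1 < ρp s1 L1 := by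
    intro s1 hs1 s2 hs2 h12
    have hS12sub : Icc s1 s2 ⊆ Icc s1 L1 := Icc_subset_Icc le_rfl hs2.2.le
    have hS12sub' : Icc s1 s2 ⊆ Icc L0 L1 := Icc_subset_Icc hs1.1.le hs2.2.le
    have hS2sub : Icc s2 L1 ⊆ Icc s1 L1 := Icc_subset_Icc h12.le le_rfl
    have hs2m1 : s2 ∈ Icc s1 L1 := ⟨h12.le, hs2.2.le⟩
    have hs2m2 : s2 ∈ Icc s2 L1 := left_mem_Icc.2 hs2.2.le
    have hL1m1 : L1 ∈ Icc s1 L1 := right_mem_Icc.2 hs1.2.le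
    have hL1m2 : L1 ∈ Icc s2 L1 := right_mem_Icc.2 hs2.2.le
    -- Step 1: H(ρp s1 ·) − Gm is strictly increasing on [s1, s2]
    have hD : StrictMonoOn
        (fun x => (J ^ 2 / ρp s1 x + (ρp s1 x) ^ γ) - (ρm x * (um x) ^ 2 + ρm x ^ γ))
        (Icc s1 s2) := by
      apply strictMonoOn_of_deriv_pos (convex_Icc _ _)
      · intro x hx
        exact (((keyH s1 hs1 x (hS12sub hx)).mono hS12sub).sub
          ((hmmom x (hS12sub' hx)).mono hS12sub')).continuousWithinAt
      · intro x hx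
        rw [interior_Icc] at hx
        have hx1 : x ∈ Icc s1 L1 := hS12sub (Ioo_subset_Icc_self hx)
        have hx0 : x ∈ Icc L0 L1 := hS12sub' (Ioo_subset_Icc_self hx)
        have hda := (((keyH s1 hs1 x hx1).mono hS12sub).sub
          ((hmmom x hx0).mono hS12sub')).hasDerivAt (Icc_mem_nhds hx.1 hx.2)
        rw [show deriv (fun x => J ^ 2 / ρp s1 x + ρp s1 x ^ γ - (ρm x * um x ^ 2 + ρm x ^ γ)) x = _ from hda.deriv]
        have h1 := hlt s1 hs1 x hx1 hx0
        have h2 := hf x hx0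
        nlinarith
    have hDlt := hD (left_mem_Icc.2 h12.le) (right_mem_Icc.2 h12.le) h12
    -- value at s1 is 0 by Rankine–Hugoniot
    have hDs1 : (J ^ 2 / ρp s1 s1 + (ρp s1 s1) ^ γ) - (ρm s1 * (um s1) ^ 2 + ρm s1 ^ γ) = 0 := by
      rw [hconv s1 hs1 s1 (left_mem_Icc.2 hs1.2.le), hRH s1 hs1]
      ring
    -- hence H(ρp s1 s2) > H(ρp s2 s2)
    have hHgt : J ^ 2 / ρp s2 s2 + (ρp s2 s2) ^ γ < J ^ 2 / ρp s1 s2 + (ρp s1 s2) ^ γ := by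
      have e : J ^ 2 / ρp s2 s2 + (ρp s2 s2) ^ γ = ρm s2 * (um s2) ^ 2 + ρm s2 ^ γ := by
        rw [hconv s2 hs2 s2 hs2m2, hRH s2 hs2]
      rw [e]
      simp only [hDs1] at hDlt
      linarith
    -- step 2: ρp s2 s2 < ρp s1 s2 and B comparison
    have hρ22 := (hpstate s2 hs2 s2 hs2m2).1
    have hρ12 := (hpstate s1 hs1 s2 hs2m1).1
    have hsub22 := hsubp s2 hs2 s2 hs2m2
    have hsub12 := hsubp s1 hs1 s2 hs2m1
    have hρlt : ρp s2 s2 < ρp s1 s2 := by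
      by_contra hc
      push_neg at hc
      rcases hc.lt_or_eq with h' | h'
      · exact absurd (subsonic_strictMono hγ1 hρ12 hsub12 h').1 (by linarith)
      · rw [h'] at hHgt; exact lt_irrefl _ hHgt
    have hBlt := (subsonic_strictMono hγ1 hρ22 hsub22 hρlt).2
    -- step 3: constancy of the Bernoulli difference on [s2, L1]
    have hconst :
        (J ^ 2 / 2 * (ρp s1 L1) ^ (-2 : ℝ) + γ / (γ - 1) * (ρp s1 L1) ^ (γ - 1)) -
          (J ^ 2 / 2 * (ρp s2 L1) ^ (-2 : ℝ) + γ / (γ - 1) * (ρp s2 L1) ^ (γ - 1)) =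
        (J ^ 2 / 2 * (ρp s1 s2) ^ (-2 : ℝ) + γ / (γ - 1) * (ρp s1 s2) ^ (γ - 1)) -
          (J ^ 2 / 2 * (ρp s2 s2) ^ (-2 : ℝ) + γ / (γ - 1) * (ρp s2 s2) ^ (γ - 1)) := by
      have hder : ∀ x ∈ Icc s2 L1,
          HasDerivWithinAt
            (fun t => (J ^ 2 / 2 * (ρp s1 t) ^ (-2 : ℝ) + γ / (γ - 1) * (ρp s1 t) ^ (γ - 1)) -
              (J ^ 2 / 2 * (ρp s2 t) ^ (-2 : ℝ) + γ / (γ - 1) * (ρp s2 t) ^ (γ - 1)))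
            ((fun _ : ℝ => (0 : ℝ)) x) (Icc s2 L1) x := by
        intro x hx
        have h1 := (keyB s1 hs1 x (hS2sub hx)).mono hS2sub
        have h2 := keyB s2 hs2 x hx
        have h3 := h1.sub h2
        simp only [sub_self] at h3
        exact h3
      have hle := Convex.norm_image_sub_le_of_norm_hasDerivWithin_le (C := 0) hder
        (fun x _ => by simp) (convex_Icc s2 L1) hs2m2 hL1m2
      have h1 : J ^ 2 / 2 * ρp s1 L1 ^ (-2 : ℝ) + γ / (γ - 1) * ρp s1 L1 ^ (γ - 1) -
            (J ^ 2 / 2 * ρp s2 L1 ^ (-2 : ℝ) + γ / (γ - 1) * ρp s2 L1 ^ (γ - 1)) -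
          (J ^ 2 / 2 * ρp s1 s2 ^ (-2 : ℝ) + γ / (γ - 1) * ρp s1 s2 ^ (γ - 1) -
            (J ^ 2 / 2 * ρp s2 s2 ^ (-2 : ℝ) + γ / (γ - 1) * ρp s2 s2 ^ (γ - 1))) = 0 := by
        simpa [Real.norm_eq_abs] using hle
      linarith
    -- step 4: conclude
    have hBfin :
        J ^ 2 / 2 * (ρp s2 L1) ^ (-2 : ℝ) + γ / (γ - 1) * (ρp s2 L1) ^ (γ - 1) <
          J ^ 2 / 2 * (ρp s1 L1) ^ (-2 : ℝ) + γ / (γ - 1) * (ρp s1 L1) ^ (γ - 1) := by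
      linarith
    have hρ1L := (hpstate s1 hs1 L1 hL1m1).1
    have hsub1L := hsubp s1 hs1 L1 hL1m1
    by_contra hc
    push_neg at hc
    rcases hc.lt_or_eq with h' | h'
    · exact absurd (subsonic_strictMono hγ1 hρ1L hsub1L h').2 (by linarith)
    · rw [h'] at hBfin; exact lt_irrefl _ hBfin
  refine ⟨fun a ha b hb hab => main a ha b hb hab, fun a ha b hb hab => ?_⟩
  exact Real.rpow_lt_rpow (hpstate b hb L1 (right_mem_Icc.2 hb.2.le)).1.le
    (main a ha b hb hab) (by linarith)
end

section
/- Key sign computation in the monotonicity proof: with notation as in the background transonic shock, define $I = \big(\gamma(\bar\rho^+(L_s))^{\gamma-2} - \frac{J^2}{(\bar\rho^+(L_s))^3}\big)\frac{d\bar\rho^+(L_s)}{dL_s} - \bar f(L_s)$. Then $I = \frac{\bar f(L_s)\,(\bar u^+(L_s)-\bar u^-(L_s))}{\bar u^-(L_s)} < 0$, using the derivative relation $\big(1-\frac{\gamma J^{\gamma-1}}{(\bar u^\pm(L_s))^{\gamma+1}}\big)\frac{d\bar u^\pm(L_s)}{dL_s} = \frac{\bar f(L_s)}{\bar u^-(L_s)}$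 and $\bar u^+(L_s)<\bar u^-(L_s)$, $\bar f(L_s)>0$. -/
/-! With `ρ⁺ = J/u⁺` one has `dρ⁺ = -J du⁺/(u⁺)²`, and substituting this turns
`(γ (ρ⁺)^(γ-2) - J²/(ρ⁺)³) dρ⁺` into `u⁺ (1 - γ J^(γ-1)/(u⁺)^(γ+1)) du⁺`, which the
derivative relation evaluates to `u⁺ f/u⁻`. Hence `I = f (u⁺ - u⁻)/u⁻`, negative since the
flow decelerates across the shock. -/

theorem deriv_eq_neg_div_sq_of_mul_eq_const {𝕜 : Type*} [NontriviallyNormedField 𝕜]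
    {ρ u : 𝕜 → 𝕜} {J x : 𝕜} (h : ∀ s, ρ s * u s = J) (hu : ∀ s, u s ≠ 0)
    (hdu : DifferentiableAt 𝕜 u x) : deriv ρ x = -(J * deriv u x) / u x ^ 2 := by
  obtain rfl : ρ = fun s => J / u s := funext fun s => eq_div_of_mul_eq (hu s) (h s)
  refine ((hasDerivAt_const x J).div hdu.hasDerivAt (hu x)).deriv.trans ?_
  ring

theorem div_rpow_sub_two {γ J u : ℝ} (hJ : 0 < J) (hu : 0 < u) :
    (J / u) ^ (γ - 2) = J ^ (γ - 1) * u ^ 2 / (J * u ^ γ) := by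
  rw [Real.div_rpow hJ.le hu.le, Real.rpow_sub hJ, Real.rpow_sub hu, Real.rpow_sub_one hJ.ne']
  field_simp
  norm_cast
  ring

theorem density_factor_mul_deriv_density {γ J u : ℝ} (hJ : 0 < J) (hu : 0 < u) (u' : ℝ) :
    (γ * (J / u) ^ (γ - 2) - J ^ 2 / (J / u) ^ 3) * (-(J * u') / u ^ 2) =
      (1 - γ * J ^ (γ - 1) / u ^ (γ + 1)) * u' * u := by
  rw [div_rpow_sub_two hJ hu, Real.rpow_add_one hu.ne']
  field_simp
  ring

theorem stmt6_general (γ J Ls : ℝ) (hJ : 0 < J)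
    (um up ρp f : ℝ → ℝ)
    (hup : DifferentiableAt ℝ up Ls)
    (hpos : ∀ s, 0 < up s ∧ 0 < um s)
    (hmass : ∀ s, ρp s * up s = J)
    (hlt : up Ls < um Ls) (hf : 0 < f Ls)
    (hderup : (1 - γ * J ^ (γ - 1) / (up Ls) ^ (γ + 1)) * deriv up Ls = f Ls / um Ls) :
    (γ * (ρp Ls) ^ (γ - 2) - J ^ 2 / (ρp Ls) ^ 3) * deriv ρp Ls - f Ls =
      f Ls * (up Ls - um Ls) / um Ls ∧
    (γ * (ρp Ls) ^ (γ - 2) - J ^ 2 / (ρp Ls) ^ 3) * deriv ρp Ls - f Ls < 0 := by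
  obtain ⟨hu, hm⟩ := hpos Ls
  have hρ : ρp Ls = J / up Ls := eq_div_of_mul_eq hu.ne' (hmass Ls)
  have hdρ := deriv_eq_neg_div_sq_of_mul_eq_const hmass (fun s => (hpos s).1.ne') hup
  have hI : (γ * (ρp Ls) ^ (γ - 2) - J ^ 2 / (ρp Ls) ^ 3) * deriv ρp Ls - f Ls =
      f Ls * (up Ls - um Ls) / um Ls := by
    rw [hρ, hdρ, density_factor_mul_deriv_density hJ hu, hderup]
    field_simp
  exact ⟨hI, hI ▸ div_neg_of_neg_of_pos (mul_neg_of_pos_of_neg hf (by linarith)) hm⟩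

/-- key sign computation in the monotonicity proof.  With the
shock states `u⁻ = um Ls`, `u⁺ = up Ls`, densities `ρ⁺ = J/u⁺` regarded as
differentiable functions of the shock position, the derivative relation
`(1 - γ J^(γ-1)/(u^±)^(γ+1)) d u^±/dLs = f(Ls)/u⁻` from the Rankine–Hugoniot
condition, together with `u⁺ < u⁻` and `f(Ls) > 0`, gives
`I = (γ (ρ⁺)^(γ-2) - J²/(ρ⁺)³) dρ⁺/dLs - f(Ls) = f(Ls)(u⁺ - u⁻)/u⁻ < 0`. -/
theorem stmt6 (γ J Ls : ℝ) (hγ : 1 < γ) (hJ : 0 < J)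
    (um up ρp f : ℝ → ℝ)
    (hum : DifferentiableAt ℝ um Ls) (hup : DifferentiableAt ℝ up Ls)
    (hρp : DifferentiableAt ℝ ρp Ls)
    (hpos : ∀ s, 0 < up s ∧ 0 < um s)
    (hmass : ∀ s, ρp s * up s = J)
    (hlt : up Ls < um Ls) (hf : 0 < f Ls)
    (hsub : (up Ls) ^ (γ + 1) < γ * J ^ (γ - 1))
    (hsup : γ * J ^ (γ - 1) < (um Ls) ^ (γ + 1))
    (hderup : (1 - γ * J ^ (γ - 1) / (up Ls) ^ (γ + 1)) * deriv up Ls = f Ls / um Ls)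
    (hderum : (1 - γ * J ^ (γ - 1) / (um Ls) ^ (γ + 1)) * deriv um Ls = f Ls / um Ls) :
    (γ * (ρp Ls) ^ (γ - 2) - J ^ 2 / (ρp Ls) ^ 3) * deriv ρp Ls - f Ls =
      f Ls * (up Ls - um Ls) / um Ls ∧
    (γ * (ρp Ls) ^ (γ - 2) - J ^ 2 / (ρp Ls) ^ 3) * deriv ρp Ls - f Ls < 0 :=
  stmt6_general γ J Ls hJ um up ρp f hup hpos hmass hlt hf hderup
end

section
/- For $C^1$ solutions with $\rho>0$ and $u_1\neq 0$, the 2-D steady isentropic Euler system with external force $\partial_1(\rho u_1)+\partial_2(\rho u_2)=0$, $\partial_1(\rho u_1^2+P)+\partial_2(\rho u_1u_2)=\rho\partial_1\Phi$, $\partial_1(\rho u_1u_2)+\partial_2(\rho u_2^2+P)=\rho\partial_2\Phi$ (with $P=\rho^\gamma$) is equivalent to the deformation–curl system: $\sum_{i,j=1}^2 (c^2(\rho)\delta_{ij}-u_iu_j)\partial_i u_j + u_1\partial_1\Phi + u_2\partial_2\Phi = 0$, $\partial_1 u_2 - \partial_2 u_1 = -\frac{\partial_2 B}{u_1}$, and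 $u_1\partial_1 B + u_2\partial_2 B = 0$, where $B=\tfrac12|\mathbf u|^2 + \frac{\gamma}{\gamma-1}\rho^{\gamma-1}-\Phi$ and $\rho$ is expressed through $B$, $\Phi$, $|\mathbf u|^2$ via $\rho=[\frac{\gamma-1}{\gamma}(B+\Phi-\tfrac12|\mathbf u|^2)]^{1/(\gamma-1)}$. -/
/-!
With the enthalpy `h = γ/(γ-1) ρ^(γ-1)` one has `∇P = ρ ∇h = c² ∇ρ`. Hence the `i`-th conservative
momentum equation, with the force moved to the left, equals `uᵢ ∇·(ρu) + ρ (∂ᵢB ∓ uⱼ ω)` with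
`ω = ∂₁u₂ - ∂₂u₁` (Lamb form), and `ρ` times the deformation expression equals
`c² ∇·(ρu) - ρ u·∇B`. Since `ρ`, `c²` and `u₁` do not vanish, the two systems are then
equivalent by linear algebra: the curl equation is the second Lamb equation, `u·∇B = 0` is `u₁`
times the first plus `u₂` times the second, and the deformation equation is the continuity
equation. The formula for `ρ` only inverts the definition of `h`.
-/

noncomputable section

/-- First partial derivative `∂₁` of a function on `ℝ²`. -/
def pd1 (g : ℝ × ℝ → ℝ) (x : ℝ × ℝ) : ℝ := fderiv ℝ g x (1, 0)

/-- Second partial derivative `∂₂` of a function on `ℝ²`. -/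
def pd2 (g : ℝ × ℝ → ℝ) (x : ℝ × ℝ) : ℝ := fderiv ℝ g x (0, 1)

def enthalpy (γ : ℝ) (ρ : ℝ × ℝ → ℝ) : ℝ × ℝ → ℝ := fun y => γ / (γ - 1) * ρ y ^ (γ - 1)

def bernoulliFn (γ : ℝ) (u1 u2 ρ Φ : ℝ × ℝ → ℝ) : ℝ × ℝ → ℝ := fun y =>
  1 / 2 * ((u1 y) ^ 2 + (u2 y) ^ 2) + enthalpy γ ρ y - Φ y

def divMassFlux (ρ u1 u2 : ℝ × ℝ → ℝ) (x : ℝ × ℝ) : ℝ :=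
  pd1 (fun y => ρ y * u1 y) x + pd2 (fun y => ρ y * u2 y) x

/- Read `M` as `∇·(ρu)`, `Bᵢ` as `∂ᵢB`, `ω` as `∂₁u₂ - ∂₂u₁`, `c2` as `c²(ρ)` and `Pᵢ = Fᵢ` as the
`i`-th momentum equation in conservation form. -/
theorem euler_iff_deformation_curl_of_identities {ρ c2 u1 u2 M P1 F1 P2 F2 D B1 B2 ω : ℝ}
    (hρ : ρ ≠ 0) (hc2 : c2 ≠ 0) (hu1 : u1 ≠ 0)
    (h1 : P1 - F1 = u1 * M + ρ * (B1 - u2 * ω))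
    (h2 : P2 - F2 = u2 * M + ρ * (B2 + u1 * ω))
    (hD : ρ * D = c2 * M - ρ * (u1 * B1 + u2 * B2)) :
    (M = 0 ∧ P1 = F1 ∧ P2 = F2) ↔ (D = 0 ∧ ω = -B2 / u1 ∧ u1 * B1 + u2 * B2 = 0) := by
  rw [eq_div_iff hu1]
  constructor
  · rintro ⟨hM, hP1, hP2⟩
    have hB1 : B1 - u2 * ω = 0 :=
      (mul_eq_zero.mp (by linear_combination hP1 - h1 - u1 * hM)).resolve_left hρ
    have hB2 : B2 + u1 * ω = 0 :=
      (mul_eq_zero.mp (by linear_combination hP2 - h2 - u2 * hM)).resolve_left hρ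
    have hT : u1 * B1 + u2 * B2 = 0 := by linear_combination u1 * hB1 + u2 * hB2
    refine ⟨?_, by linear_combination hB2, hT⟩
    exact (mul_eq_zero.mp (by linear_combination hD + c2 * hM - ρ * hT)).resolve_left hρ
  · rintro ⟨hD0, hω, hT⟩
    have hB2 : B2 + u1 * ω = 0 := by linear_combination hω
    have hB1 : B1 - u2 * ω = 0 :=
      (mul_eq_zero.mp (by linear_combination hT - u2 * hB2)).resolve_left hu1
    have hM : M = 0 :=
      (mul_eq_zero.mp (by linear_combination ρ * hD0 - hD + ρ * hT)).resolve_left hc2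
    refine ⟨hM, ?_, ?_⟩
    · linear_combination h1 + u1 * hM + ρ * hB1
    · linear_combination h2 + u2 * hM + ρ * hB2

section

variable {γ : ℝ} {f u1 u2 ρ Φ : ℝ × ℝ → ℝ} {x v : ℝ × ℝ}

theorem fderiv_rpow_const_apply {p : ℝ} (hf : DifferentiableAt ℝ f x) (hfx : f x ≠ 0) :
    fderiv ℝ (fun y => f y ^ p) x v = p * f x ^ (p - 1) * fderiv ℝ f x v := by
  simp [(hf.hasFDerivAt.rpow_const (Or.inl hfx)).fderiv]

theorem differentiableAt_enthalpy (hρ : DifferentiableAt ℝ ρ x) (hρx : ρ x ≠ 0) :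
    DifferentiableAt ℝ (enthalpy γ ρ) x :=
  (hρ.rpow_const (Or.inl hρx)).const_mul _

theorem mul_fderiv_enthalpy_apply (hγ : γ ≠ 1) (hρ : DifferentiableAt ℝ ρ x) (hρx : 0 < ρ x) :
    ρ x * fderiv ℝ (enthalpy γ ρ) x v = γ * ρ x ^ (γ - 1) * fderiv ℝ ρ x v := by
  have hγ1 : γ - 1 ≠ 0 := sub_ne_zero.mpr hγ
  unfold enthalpy
  simp only [fderiv_const_mul (hρ.rpow_const (Or.inl hρx.ne')), FunLike.coe_smul,
    Pi.smul_apply, smul_eq_mul, fderiv_rpow_const_apply hρ hρx.ne',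
    Real.rpow_sub_one hρx.ne' (γ - 1)]
  field_simp

theorem fderiv_bernoulliFn_apply (hu1 : DifferentiableAt ℝ u1 x)
    (hu2 : DifferentiableAt ℝ u2 x) (hρ : DifferentiableAt ℝ ρ x) (hΦ : DifferentiableAt ℝ Φ x)
    (hρx : ρ x ≠ 0) :
    fderiv ℝ (bernoulliFn γ u1 u2 ρ Φ) x v = u1 x * fderiv ℝ u1 x v + u2 x * fderiv ℝ u2 x v
      + fderiv ℝ (enthalpy γ ρ) x v - fderiv ℝ Φ x v := by
  have hh := differentiableAt_enthalpy (γ := γ) hρ hρx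
  unfold bernoulliFn
  simp (disch := fun_prop) [fderiv_fun_sub, fderiv_fun_add, fderiv_const_mul, fderiv_fun_pow]
  ring

theorem momentum_one_sub_force_eq (hγ : γ ≠ 1) (hu1 : DifferentiableAt ℝ u1 x)
    (hu2 : DifferentiableAt ℝ u2 x) (hρ : DifferentiableAt ℝ ρ x) (hΦ : DifferentiableAt ℝ Φ x)
    (hρx : 0 < ρ x) :
    pd1 (fun y => ρ y * (u1 y) ^ 2 + ρ y ^ γ) x + pd2 (fun y => ρ y * u1 y * u2 y) x
        - ρ x * pd1 Φ x
      = u1 x * divMassFlux ρ u1 u2 x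
        + ρ x * (pd1 (bernoulliFn γ u1 u2 ρ Φ) x - u2 x * (pd1 u2 x - pd2 u1 x)) := by
  have hP : DifferentiableAt ℝ (fun y => ρ y ^ γ) x := hρ.rpow_const (Or.inl hρx.ne')
  have hh := mul_fderiv_enthalpy_apply (v := (1, 0)) hγ hρ hρx
  simp only [divMassFlux, pd1, pd2, fderiv_bernoulliFn_apply hu1 hu2 hρ hΦ hρx.ne']
  simp (disch := fun_prop) [fderiv_fun_add, fderiv_fun_mul, fderiv_fun_pow,
    fderiv_rpow_const_apply hρ hρx.ne']
  linear_combination -hh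

theorem momentum_two_sub_force_eq (hγ : γ ≠ 1) (hu1 : DifferentiableAt ℝ u1 x)
    (hu2 : DifferentiableAt ℝ u2 x) (hρ : DifferentiableAt ℝ ρ x) (hΦ : DifferentiableAt ℝ Φ x)
    (hρx : 0 < ρ x) :
    pd1 (fun y => ρ y * u1 y * u2 y) x + pd2 (fun y => ρ y * (u2 y) ^ 2 + ρ y ^ γ) x
        - ρ x * pd2 Φ x
      = u2 x * divMassFlux ρ u1 u2 x
        + ρ x * (pd2 (bernoulliFn γ u1 u2 ρ Φ) x + u1 x * (pd1 u2 x - pd2 u1 x)) := by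
  have hP : DifferentiableAt ℝ (fun y => ρ y ^ γ) x := hρ.rpow_const (Or.inl hρx.ne')
  have hh := mul_fderiv_enthalpy_apply (v := (0, 1)) hγ hρ hρx
  simp only [divMassFlux, pd1, pd2, fderiv_bernoulliFn_apply hu1 hu2 hρ hΦ hρx.ne']
  simp (disch := fun_prop) [fderiv_fun_add, fderiv_fun_mul, fderiv_fun_pow,
    fderiv_rpow_const_apply hρ hρx.ne']
  linear_combination -hh

theorem density_mul_deformation_eq (hγ : γ ≠ 1) (hu1 : DifferentiableAt ℝ u1 x)
    (hu2 : DifferentiableAt ℝ u2 x) (hρ : DifferentiableAt ℝ ρ x) (hΦ : DifferentiableAt ℝ Φ x)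
    (hρx : 0 < ρ x) :
    ρ x * ((γ * ρ x ^ (γ - 1) - (u1 x) ^ 2) * pd1 u1 x
            - u1 x * u2 x * pd1 u2 x - u2 x * u1 x * pd2 u1 x
            + (γ * ρ x ^ (γ - 1) - (u2 x) ^ 2) * pd2 u2 x
            + u1 x * pd1 Φ x + u2 x * pd2 Φ x)
      = γ * ρ x ^ (γ - 1) * divMassFlux ρ u1 u2 x
        - ρ x * (u1 x * pd1 (bernoulliFn γ u1 u2 ρ Φ) x
          + u2 x * pd2 (bernoulliFn γ u1 u2 ρ Φ) x) := by
  have hh1 := mul_fderiv_enthalpy_apply (v := (1, 0)) hγ hρ hρx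
  have hh2 := mul_fderiv_enthalpy_apply (v := (0, 1)) hγ hρ hρx
  simp only [divMassFlux, pd1, pd2, fderiv_bernoulliFn_apply hu1 hu2 hρ hΦ hρx.ne']
  simp (disch := fun_prop) [fderiv_fun_mul]
  linear_combination u1 x * hh1 + u2 x * hh2

theorem density_eq_rpow_bernoulliFn (hγ₀ : γ ≠ 0) (hγ : γ ≠ 1) (hρx : 0 < ρ x) :
    ρ x = ((γ - 1) / γ * (bernoulliFn γ u1 u2 ρ Φ x + Φ x
      - 1 / 2 * ((u1 x) ^ 2 + (u2 x) ^ 2))) ^ (1 / (γ - 1)) := by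
  have hγ1 : γ - 1 ≠ 0 := sub_ne_zero.mpr hγ
  have hB : (γ - 1) / γ * (bernoulliFn γ u1 u2 ρ Φ x + Φ x - 1 / 2 * ((u1 x) ^ 2 + (u2 x) ^ 2))
      = ρ x ^ (γ - 1) := by
    unfold bernoulliFn enthalpy
    field_simp
    ring
  rw [hB, ← Real.rpow_mul hρx.le, mul_one_div_cancel hγ1, Real.rpow_one]

end

theorem stmt9_general (γ : ℝ) (hγ : 1 < γ) (Ω : Set (ℝ × ℝ))
    (u1 u2 ρ Φ : ℝ × ℝ → ℝ)
    (hu1 : ContDiff ℝ 1 u1) (hu2 : ContDiff ℝ 1 u2)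
    (hρ : ContDiff ℝ 1 ρ) (hΦ : ContDiff ℝ 1 Φ)
    (hρpos : ∀ x ∈ Ω, 0 < ρ x) (hu1ne : ∀ x ∈ Ω, u1 x ≠ 0) :
    (∀ x ∈ Ω,
        pd1 (fun y => ρ y * u1 y) x + pd2 (fun y => ρ y * u2 y) x = 0 ∧
        pd1 (fun y => ρ y * (u1 y) ^ 2 + ρ y ^ γ) x
          + pd2 (fun y => ρ y * u1 y * u2 y) x = ρ x * pd1 Φ x ∧
        pd1 (fun y => ρ y * u1 y * u2 y) x
          + pd2 (fun y => ρ y * (u2 y) ^ 2 + ρ y ^ γ) x = ρ x * pd2 Φ x) ↔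
    (∀ x ∈ Ω,
        ((γ * ρ x ^ (γ - 1) - (u1 x) ^ 2) * pd1 u1 x
            - u1 x * u2 x * pd1 u2 x - u2 x * u1 x * pd2 u1 x
            + (γ * ρ x ^ (γ - 1) - (u2 x) ^ 2) * pd2 u2 x
            + u1 x * pd1 Φ x + u2 x * pd2 Φ x = 0) ∧
        (pd1 u2 x - pd2 u1 x =
          -(pd2 (fun y => 1 / 2 * ((u1 y) ^ 2 + (u2 y) ^ 2)
              + γ / (γ - 1) * ρ y ^ (γ - 1) - Φ y) x) / u1 x) ∧
        (u1 x * pd1 (fun y => 1 / 2 * ((u1 y) ^ 2 + (u2 y) ^ 2)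
              + γ / (γ - 1) * ρ y ^ (γ - 1) - Φ y) x
          + u2 x * pd2 (fun y => 1 / 2 * ((u1 y) ^ 2 + (u2 y) ^ 2)
              + γ / (γ - 1) * ρ y ^ (γ - 1) - Φ y) x = 0) ∧
        ρ x = ((γ - 1) / γ *
            ((1 / 2 * ((u1 x) ^ 2 + (u2 x) ^ 2) + γ / (γ - 1) * ρ x ^ (γ - 1) - Φ x)
              + Φ x - 1 / 2 * ((u1 x) ^ 2 + (u2 x) ^ 2))) ^ (1 / (γ - 1))) := by
  have hγ₀ : 0 < γ := by linarith
  refine forall₂_congr fun x hx => ?_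
  have hd {f : ℝ × ℝ → ℝ} (hf : ContDiff ℝ 1 f) : DifferentiableAt ℝ f x :=
    hf.differentiable one_ne_zero x
  have hρx := hρpos x hx
  have hdens := density_eq_rpow_bernoulliFn (u1 := u1) (u2 := u2) (Φ := Φ) hγ₀.ne' hγ.ne' hρx
  have hc2 : γ * ρ x ^ (γ - 1) ≠ 0 := by positivity
  refine (euler_iff_deformation_curl_of_identities hρx.ne' hc2 (hu1ne x hx) ?_ ?_ ?_).trans
    (and_congr_right' (and_congr_right' (and_iff_left hdens).symm))
  · exact momentum_one_sub_force_eq hγ.ne' (hd hu1) (hd hu2) (hd hρ) (hd hΦ) hρx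
  · exact momentum_two_sub_force_eq hγ.ne' (hd hu1) (hd hu2) (hd hρ) (hd hΦ) hρx
  · exact density_mul_deformation_eq hγ.ne' (hd hu1) (hd hu2) (hd hρ) (hd hΦ) hρx

/-- equivalence of the 2-D steady isentropic Euler system with
external force and its deformation–curl formulation, for `C¹` flows with
`ρ > 0` and `u₁ ≠ 0` on an open set `Ω`.  Here `P = ρ^γ`,
`c²(ρ) = γ ρ^(γ-1)`, and `B = |u|²/2 + γ/(γ-1) ρ^(γ-1) - Φ`, through which the
density is recovered as `ρ = [(γ-1)/γ (B + Φ - |u|²/2)]^(1/(γ-1))`. -/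
theorem stmt9 (γ : ℝ) (hγ : 1 < γ) (Ω : Set (ℝ × ℝ)) (hΩ : IsOpen Ω)
    (u1 u2 ρ Φ : ℝ × ℝ → ℝ)
    (hu1 : ContDiff ℝ 1 u1) (hu2 : ContDiff ℝ 1 u2)
    (hρ : ContDiff ℝ 1 ρ) (hΦ : ContDiff ℝ 1 Φ)
    (hρpos : ∀ x ∈ Ω, 0 < ρ x) (hu1ne : ∀ x ∈ Ω, u1 x ≠ 0) :
    (∀ x ∈ Ω,
        pd1 (fun y => ρ y * u1 y) x + pd2 (fun y => ρ y * u2 y) x = 0 ∧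
        pd1 (fun y => ρ y * (u1 y) ^ 2 + ρ y ^ γ) x
          + pd2 (fun y => ρ y * u1 y * u2 y) x = ρ x * pd1 Φ x ∧
        pd1 (fun y => ρ y * u1 y * u2 y) x
          + pd2 (fun y => ρ y * (u2 y) ^ 2 + ρ y ^ γ) x = ρ x * pd2 Φ x) ↔
    (∀ x ∈ Ω,
        ((γ * ρ x ^ (γ - 1) - (u1 x) ^ 2) * pd1 u1 x
            - u1 x * u2 x * pd1 u2 x - u2 x * u1 x * pd2 u1 x
            + (γ * ρ x ^ (γ - 1) - (u2 x) ^ 2) * pd2 u2 x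
            + u1 x * pd1 Φ x + u2 x * pd2 Φ x = 0) ∧
        (pd1 u2 x - pd2 u1 x =
          -(pd2 (fun y => 1 / 2 * ((u1 y) ^ 2 + (u2 y) ^ 2)
              + γ / (γ - 1) * ρ y ^ (γ - 1) - Φ y) x) / u1 x) ∧
        (u1 x * pd1 (fun y => 1 / 2 * ((u1 y) ^ 2 + (u2 y) ^ 2)
              + γ / (γ - 1) * ρ y ^ (γ - 1) - Φ y) x
          + u2 x * pd2 (fun y => 1 / 2 * ((u1 y) ^ 2 + (u2 y) ^ 2)
              + γ / (γ - 1) * ρ y ^ (γ - 1) - Φ y) x = 0) ∧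
        ρ x = ((γ - 1) / γ *
            ((1 / 2 * ((u1 x) ^ 2 + (u2 x) ^ 2) + γ / (γ - 1) * ρ x ^ (γ - 1) - Φ x)
              + Φ x - 1 / 2 * ((u1 x) ^ 2 + (u2 x) ^ 2))) ^ (1 / (γ - 1))) :=
  stmt9_general γ hγ Ω u1 u2 ρ Φ hu1 hu2 hρ hΦ hρpos hu1ne
end
end
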